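/- arXiv:0808.3317 — 4 statements merged into one kernel-verified Lean document; each statement's English description precedes it below -/
import Mathlib

section
/- Let T11, T22, T33 ∈ [-1,0] be real numbers with T11 + T22 < -1 and T33 ≤ 1 + T11 + T22. If α ≥ -(1/2)(1 + T11 + T22 + T33), then 1 + α² ≥ T11² + T22². -/
theorem stmt_0 (T11 T22 T33 α : ℝ)
    (h11 : T11 ∈ Set.Icc (-1 : ℝ) 0)
    (h22 : T22 ∈ Set.Icc (-1 : ℝ) 0)
    (h33 : T33 ∈ Set.Icc (-1 : ℝ) 0)
    (hsum : T11 + T22 < -1)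
    (hT33 : T33 ≤ 1 + T11 + T22)
    (hα : α ≥ -(1 / 2) * (1 + T11 + T22 + T33)) :
    1 + α ^ 2 ≥ T11 ^ 2 + T22 ^ 2 := by
  obtain ⟨a1, a2⟩ := h11
  obtain ⟨b1, b2⟩ := h22
  have hαpos : α ≥ -(1 + T11 + T22) := by linarith
  nlinarith [sq_nonneg (α + (1 + T11 + T22)), mul_nonneg (by linarith : (0:ℝ) ≤ 1 + T11) (by linarith : (0:ℝ) ≤ 1 + T22)]
end

section
/- Define c(α) = α(2√2 - 2) - 2√(1+α²) + 2. For all α ∈ [0,1], c(α) ≥ 0, with c(0) = 0 and c(1) = 0. -/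
noncomputable def cCorrection (α : ℝ) : ℝ :=
  α * (2 * Real.sqrt 2 - 2) - 2 * Real.sqrt (1 + α ^ 2) + 2

theorem stmt_2 :
    (∀ α ∈ Set.Icc (0 : ℝ) 1, 0 ≤ cCorrection α) ∧
    cCorrection 0 = 0 ∧ cCorrection 1 = 0 := by
  have s2 : Real.sqrt 2 ^ 2 = 2 := Real.sq_sqrt (by norm_num)
  have s2pos : (1:ℝ) ≤ Real.sqrt 2 := by
    nlinarith [Real.sqrt_nonneg 2]
  refine ⟨?_, ?_, ?_⟩
  · rintro α ⟨h0, h1⟩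
    have key : Real.sqrt (1 + α ^ 2) ≤ α * (Real.sqrt 2 - 1) + 1 := by
      have hrhs : 0 ≤ α * (Real.sqrt 2 - 1) + 1 := by nlinarith
      have : (1 + α ^ 2) ≤ (α * (Real.sqrt 2 - 1) + 1) ^ 2 := by nlinarith [mul_nonneg (mul_nonneg (sub_nonneg.2 s2pos) h0) (sub_nonneg.2 h1)]
      calc Real.sqrt (1 + α ^ 2) ≤ Real.sqrt ((α * (Real.sqrt 2 - 1) + 1) ^ 2) :=
            Real.sqrt_le_sqrt this
        _ = α * (Real.sqrt 2 - 1) + 1 := Real.sqrt_sq hrhs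
    unfold cCorrection
    nlinarith [key]
  · simp [cCorrection]
  · have : Real.sqrt (1 + 1 ^ 2) = Real.sqrt 2 := by norm_num
    unfold cCorrection
    rw [this]; ring
end

section
/- Let P₀, P₁, Q₀, Q₁ be orthogonal projections on a finite-dimensional complex Hilbert space H with P₀ + P₁ = I and Q₀ + Q₁ = I. Then H decomposes as an orthogonal direct sum of subspaces, each of dimension 1 or 2, each of which is invariant under all four projections. -/
/-!
For idempotents `P` and `Q` the operator `(P - Q)²` commutes with `Q`. If `w` is a common
eigenvector of `Q` and `(P - Q)²`, then `Q (P w)` is a combination of `w` and `P w`, so `w` and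
`P w` span a subspace of dimension one or two invariant under `P` and `Q`. Because `P` and `Q` are
self-adjoint, the orthogonal complement of such a block inside a jointly invariant subspace is again
jointly invariant, and one recurses.
-/

open Module Module.End

theorem IsIdempotentElem.commute_sub_sq_right {R : Type*} [Ring R] {p q : R}
    (hp : IsIdempotentElem p) (hq : IsIdempotentElem q) : Commute ((p - q) ^ 2) q := by
  have h : (p - q) ^ 2 = p - p * q - q * p + q := by
    rw [sq, sub_mul, mul_sub, mul_sub, hp.eq, hq.eq]; abel
  rw [h, commute_iff_eq]
  simp only [add_mul, sub_mul, mul_add, mul_sub, mul_assoc, hq.eq]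
  rw [← mul_assoc q q p, hq.eq]
  abel

theorem Module.End.mem_invtSubmodule_of_add_eq_id {R M : Type*} [Ring R] [AddCommGroup M]
    [Module R M] {f g : End R M} (hfg : f + g = LinearMap.id) {W : Submodule R M}
    (hf : W ∈ f.invtSubmodule) : W ∈ g.invtSubmodule := by
  intro x hx
  rw [eq_sub_of_add_eq' hfg, Submodule.mem_comap, LinearMap.sub_apply, LinearMap.id_apply]
  exact W.sub_mem hx (hf hx)

section Block

variable {K V : Type*} [Field K] [AddCommGroup V] [Module K V]

theorem Module.End.exists_hasEigenvector_mem_of_mem_invtSubmodule [IsAlgClosed K]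
    [FiniteDimensional K V] {f : End K V} {E : Submodule K V} (hE : E ≠ ⊥)
    (hf : E ∈ f.invtSubmodule) : ∃ a : K, ∃ v ∈ E, v ≠ 0 ∧ f v = a • v := by
  have : Nontrivial E := Submodule.nontrivial_iff_ne_bot.mpr hE
  obtain ⟨a, ha⟩ := exists_eigenvalue (f.restrict hf)
  obtain ⟨v, hv⟩ := ha.exists_hasEigenvector
  exact ⟨a, v, v.2, by simpa using hv.2, congrArg Subtype.val hv.apply_eq_smul⟩

theorem Module.End.exists_common_eigenvector_of_commute [IsAlgClosed K] [FiniteDimensional K V]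
    {f g : End K V} (hfg : Commute f g) {E : Submodule K V} (hE : E ≠ ⊥)
    (hf : E ∈ f.invtSubmodule) (hg : E ∈ g.invtSubmodule) :
    ∃ a b : K, ∃ v ∈ E, v ≠ 0 ∧ f v = a • v ∧ g v = b • v := by
  obtain ⟨a, v, hvE, hv0, hfv⟩ := exists_hasEigenvector_mem_of_mem_invtSubmodule hE hf
  have hF : E ⊓ f.eigenspace a ≠ ⊥ :=
    (Submodule.ne_bot_iff _).mpr ⟨v, ⟨hvE, mem_eigenspace_iff.mpr hfv⟩, hv0⟩
  have hgF : E ⊓ f.eigenspace a ∈ g.invtSubmodule := by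
    rintro x ⟨hxE, hxa⟩
    refine ⟨hg hxE, mem_eigenspace_iff.mpr ?_⟩
    rw [← mul_apply, hfg.eq, mul_apply, mem_eigenspace_iff.mp hxa, map_smul]
  obtain ⟨b, w, ⟨hwE, hwa⟩, hw0, hgw⟩ := exists_hasEigenvector_mem_of_mem_invtSubmodule hF hgF
  exact ⟨a, b, w, hwE, hw0, mem_eigenspace_iff.mp hwa, hgw⟩

theorem finrank_span_pair_eq_one_or_two {v : V} (hv : v ≠ 0) (w : V) :
    finrank K (Submodule.span K {v, w}) = 1 ∨ finrank K (Submodule.span K {v, w}) = 2 := by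
  classical
  have hle : finrank K (Submodule.span K {v, w}) ≤ 2 :=
    (finrank_span_le_card ({v, w} : Set V)).trans (by simpa using Finset.card_le_two)
  have : FiniteDimensional K (Submodule.span K {v, w}) :=
    FiniteDimensional.span_of_finite K (Set.toFinite _)
  have hpos : finrank K (Submodule.span K {v, w}) ≠ 0 := by
    rw [Ne, Submodule.finrank_eq_zero]
    exact (Submodule.ne_bot_iff _).mpr ⟨v, Submodule.subset_span (by simp), hv⟩
  omega

theorem span_pair_mem_invtSubmodule {P Q : End K V} (hP : IsIdempotentElem P) {w : V} {μ c : K}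
    (hQw : Q w = μ • w) (hw : ((P - Q) ^ 2) w = c • w) :
    Submodule.span K {w, P w} ∈ P.invtSubmodule ∧ Submodule.span K {w, P w} ∈ Q.invtSubmodule := by
  set W := Submodule.span K {w, P w}
  have hwW : w ∈ W := Submodule.subset_span (by simp)
  have hPwW : P w ∈ W := Submodule.subset_span (by simp)
  have hPPw : P (P w) = P w := by rw [← mul_apply, hP.eq]
  have hQPw : Q (P w) = (1 - μ) • P w + (μ ^ 2 - c) • w := by
    simp only [sq, mul_apply, LinearMap.sub_apply, hQw, map_sub, map_smul, hPPw] at hw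
    linear_combination (norm := module) -hw
  constructor <;> refine Submodule.span_le.mpr (Set.insert_subset_iff.mpr ⟨?_, ?_⟩)
  · exact hPwW
  · simpa only [Set.singleton_subset_iff, SetLike.mem_coe, Submodule.mem_comap, hPPw] using hPwW
  · simpa only [SetLike.mem_coe, Submodule.mem_comap, hQw] using W.smul_mem μ hwW
  · simpa only [Set.singleton_subset_iff, SetLike.mem_coe, Submodule.mem_comap, hQPw] using
      W.add_mem (W.smul_mem _ hPwW) (W.smul_mem _ hwW)

def IsInvariantBlock (P Q : End K V) (W : Submodule K V) : Prop :=
  (finrank K W = 1 ∨ finrank K W = 2) ∧ W ∈ P.invtSubmodule ∧ W ∈ Q.invtSubmodule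

theorem IsInvariantBlock.ne_bot {P Q : End K V} {W : Submodule K V}
    (hW : IsInvariantBlock P Q W) : W ≠ ⊥ := by
  rintro rfl
  simp [IsInvariantBlock] at hW

theorem exists_isInvariantBlock_le [IsAlgClosed K] [FiniteDimensional K V] {P Q : End K V}
    (hP : IsIdempotentElem P) (hQ : IsIdempotentElem Q) {E : Submodule K V} (hE : E ≠ ⊥)
    (hPE : E ∈ P.invtSubmodule) (hQE : E ∈ Q.invtSubmodule) :
    ∃ W ≤ E, IsInvariantBlock P Q W := by
  have hCE : E ∈ ((P - Q) ^ 2).invtSubmodule := by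
    intro x hx
    have hPQ : ∀ y ∈ E, (P - Q) y ∈ E := fun y hy => E.sub_mem (hPE hy) (hQE hy)
    simpa only [Submodule.mem_comap, sq, mul_apply] using hPQ _ (hPQ x hx)
  obtain ⟨c, μ, w, hwE, hw0, hCw, hQw⟩ :=
    exists_common_eigenvector_of_commute (hP.commute_sub_sq_right hQ) hE hCE hQE
  obtain ⟨hPW, hQW⟩ := span_pair_mem_invtSubmodule hP hQw hCw
  refine ⟨Submodule.span K {w, P w}, ?_, finrank_span_pair_eq_one_or_two hw0 (P w), hPW, hQW⟩
  exact Submodule.span_le.mpr (Set.insert_subset_iff.mpr ⟨hwE, by simpa using hPE hwE⟩)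

end Block

open Function Submodule

theorem exists_isInternal_of_finset_pairwise_isOrtho {𝕜 E : Type*} [RCLike 𝕜]
    [NormedAddCommGroup E] [InnerProductSpace 𝕜 E] [FiniteDimensional 𝕜 E]
    {S : Finset (Submodule 𝕜 E)} (hS : (S : Set (Submodule 𝕜 E)).Pairwise IsOrtho)
    (htop : S.sup id = ⊤) :
    ∃ (n : ℕ) (V : Fin n → Submodule 𝕜 E),
      DirectSum.IsInternal V ∧ Pairwise (IsOrtho on V) ∧ ∀ i, V i ∈ S := by
  let V : Fin S.card → Submodule 𝕜 E := fun i => S.equivFin.symm i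
  have hV : Pairwise (IsOrtho on V) := fun i j hij =>
    hS (S.equivFin.symm i).2 (S.equivFin.symm j).2
      ((Subtype.val_injective.comp S.equivFin.symm.injective).ne hij)
  have hVtop : iSup V = ⊤ := by
    rw [← htop, Finset.sup_id_eq_sSup, sSup_eq_iSup']
    exact S.equivFin.symm.iSup_comp (g := fun W => W.1)
  exact ⟨S.card, V, (OrthogonalFamily.of_pairwise hV).isInternal_iff.mpr (by simp [hVtop]), hV,
    fun i => (S.equivFin.symm i).2⟩

theorem exists_finset_isInvariantBlock_of_isSymmetric {H : Type*} [NormedAddCommGroup H]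
    [InnerProductSpace ℂ H] [FiniteDimensional ℂ H] {P Q : End ℂ H} (hP : IsIdempotentElem P)
    (hQ : IsIdempotentElem Q) (hPs : P.IsSymmetric) (hQs : Q.IsSymmetric) (E : Submodule ℂ H)
    (hPE : E ∈ P.invtSubmodule) (hQE : E ∈ Q.invtSubmodule) :
    ∃ S : Finset (Submodule ℂ H), (S : Set (Submodule ℂ H)).Pairwise IsOrtho ∧
      (∀ W ∈ S, IsInvariantBlock P Q W) ∧ S.sup id = E := by
  classical
  induction E using WellFoundedLT.induction with
  | _ E ih =>
  rcases eq_or_ne E ⊥ with rfl | hE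
  · exact ⟨∅, by simp, by simp, rfl⟩
  obtain ⟨W, hWE, hW⟩ := exists_isInvariantBlock_le hP hQ hE hPE hQE
  have hlt : Wᗮ ⊓ E < E := by
    refine lt_of_le_of_ne inf_le_right fun h => hW.ne_bot (eq_bot_iff.mpr ?_)
    rw [← inf_orthogonal_eq_bot W]
    exact le_inf le_rfl (h ▸ hWE |>.trans inf_le_left)
  obtain ⟨S, hSorth, hSblock, hSsup⟩ := ih _ hlt
    (invtSubmodule.inf_mem (hPs.orthogonalComplement_mem_invtSubmodule hW.2.1) hPE)
    (invtSubmodule.inf_mem (hQs.orthogonalComplement_mem_invtSubmodule hW.2.2) hQE)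
  refine ⟨insert W S, ?_, Finset.forall_mem_insert _ _ _ |>.mpr ⟨hW, hSblock⟩, ?_⟩
  · rw [Finset.coe_insert]
    refine hSorth.insert_of_symm fun U hU _ => (isOrtho_iff_le.mpr ?_).symm
    exact (hSsup ▸ Finset.le_sup (f := id) hU).trans inf_le_left
  · rw [Finset.sup_insert, id, hSsup]
    exact sup_orthogonal_inf_of_hasOrthogonalProjection hWE

theorem stmt_9_general {H : Type*} [NormedAddCommGroup H] [InnerProductSpace ℂ H]
    [FiniteDimensional ℂ H]
    (P₀ P₁ Q₀ Q₁ : H →ₗ[ℂ] H)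
    (hP₀ : P₀ ∘ₗ P₀ = P₀)
    (hQ₀ : Q₀ ∘ₗ Q₀ = Q₀)
    (hP₀s : P₀.IsSymmetric)
    (hQ₀s : Q₀.IsSymmetric)
    (hP : P₀ + P₁ = LinearMap.id) (hQ : Q₀ + Q₁ = LinearMap.id) :
    ∃ (ι : Type) (_ : Fintype ι) (_ : DecidableEq ι) (V : ι → Submodule ℂ H),
      DirectSum.IsInternal V ∧
      (∀ i j, i ≠ j → ∀ x ∈ V i, ∀ y ∈ V j, (inner ℂ x y : ℂ) = 0) ∧
      (∀ i, Module.finrank ℂ (V i) = 1 ∨ Module.finrank ℂ (V i) = 2) ∧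
      (∀ i, ∀ x ∈ V i, P₀ x ∈ V i ∧ P₁ x ∈ V i ∧ Q₀ x ∈ V i ∧ Q₁ x ∈ V i) := by
  obtain ⟨S, hSorth, hSblock, hStop⟩ := exists_finset_isInvariantBlock_of_isSymmetric hP₀ hQ₀
    hP₀s hQ₀s ⊤ (invtSubmodule.top_mem _) (invtSubmodule.top_mem _)
  obtain ⟨n, V, hVint, hVorth, hVS⟩ := exists_isInternal_of_finset_pairwise_isOrtho hSorth hStop
  refine ⟨Fin n, inferInstance, inferInstance, V, hVint,
    fun i j hij => isOrtho_iff_inner_eq.mp (hVorth hij), fun i => (hSblock _ (hVS i)).1, ?_⟩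
  intro i x hx
  obtain ⟨-, hP₀V, hQ₀V⟩ := hSblock _ (hVS i)
  exact ⟨hP₀V hx, mem_invtSubmodule_of_add_eq_id hP hP₀V hx, hQ₀V hx,
    mem_invtSubmodule_of_add_eq_id hQ hQ₀V hx⟩

theorem stmt_9 {H : Type*} [NormedAddCommGroup H] [InnerProductSpace ℂ H]
    [FiniteDimensional ℂ H]
    (P₀ P₁ Q₀ Q₁ : H →ₗ[ℂ] H)
    (hP₀ : P₀ ∘ₗ P₀ = P₀) (hP₁ : P₁ ∘ₗ P₁ = P₁)
    (hQ₀ : Q₀ ∘ₗ Q₀ = Q₀) (hQ₁ : Q₁ ∘ₗ Q₁ = Q₁)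
    (hP₀s : P₀.IsSymmetric) (hP₁s : P₁.IsSymmetric)
    (hQ₀s : Q₀.IsSymmetric) (hQ₁s : Q₁.IsSymmetric)
    (hP : P₀ + P₁ = LinearMap.id) (hQ : Q₀ + Q₁ = LinearMap.id) :
    ∃ (ι : Type) (_ : Fintype ι) (_ : DecidableEq ι) (V : ι → Submodule ℂ H),
      DirectSum.IsInternal V ∧
      (∀ i j, i ≠ j → ∀ x ∈ V i, ∀ y ∈ V j, (inner ℂ x y : ℂ) = 0) ∧
      (∀ i, Module.finrank ℂ (V i) = 1 ∨ Module.finrank ℂ (V i) = 2) ∧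
      (∀ i, ∀ x ∈ V i, P₀ x ∈ V i ∧ P₁ x ∈ V i ∧ Q₀ x ∈ V i ∧ Q₁ x ∈ V i) :=
  stmt_9_general P₀ P₁ Q₀ Q₁ hP₀ hQ₀ hP₀s hQ₀s hP hQ
end

section
/- Let |v⟩ be a simultaneous eigenvector of Q₀, Q₀P₀Q₀, Q₀P₁Q₀ with Q₀|v⟩ = |v⟩, where P₀+P₁ = I and Q₀+Q₁ = I are pairs of complementary orthogonal projections, and suppose P₀|v⟩ ≠ 0 and P₁|v⟩ ≠ 0. Then the two-dimensional subspace spanned by P₀|v⟩ and P₁|v⟩ contains |v⟩, is invariant under P₀, P₁, Q₀, Q₁, and P₀|v⟩ ⊥ P₁|v⟩. -/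
/-!
Since `P₁ = 1 - P₀` and `Q₁ = 1 - Q₀`, invariance under `P₀` and `Q₀` suffices. The span contains
`v = P₀ v + P₁ v`; `P₀` fixes `P₀ v` and kills `P₁ v`, while, because `Q₀ v = v`, the eigenvalue
hypotheses say that `Q₀` maps `P₀ v` and `P₁ v` to multiples of `v`. Orthogonality
`⟪P₀ v, v - P₀ v⟫ = 0` holds for every symmetric idempotent, and two nonzero orthogonal vectors span
a plane.
-/

open Module Submodule

section Invariance

variable {R M : Type*} [Ring R] [AddCommGroup M] [Module R M]

theorem Submodule.span_pair_mem_invtSubmodule {f : End R M} {a b : M}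
    (ha : f a ∈ span R {a, b}) (hb : f b ∈ span R {a, b}) :
    span R {a, b} ∈ f.invtSubmodule := by
  rw [End.mem_invtSubmodule, span_le, Set.insert_subset_iff, Set.singleton_subset_iff]
  exact ⟨ha, hb⟩

theorem Module.End.mem_invtSubmodule_one_sub {f : End R M} {p : Submodule R M}
    (h : p ∈ f.invtSubmodule) : p ∈ (1 - f).invtSubmodule :=
  fun _ hx ↦ p.sub_mem hx (h hx)

theorem IsIdempotentElem.span_pair_one_sub_mem_invtSubmodule {P : End R M} (hP : IsIdempotentElem P)
    (v : M) : span R {P v, (1 - P) v} ∈ P.invtSubmodule := by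
  have hPP : P (P v) = P v := LinearMap.congr_fun hP.eq v
  refine Submodule.span_pair_mem_invtSubmodule (by rw [hPP]; exact subset_span (by simp)) ?_
  rw [LinearMap.sub_apply, End.one_apply, map_sub, hPP, sub_self]
  exact zero_mem _

end Invariance

section InnerProduct

variable {𝕜 E : Type*} [RCLike 𝕜] [NormedAddCommGroup E] [InnerProductSpace 𝕜 E]

theorem LinearMap.IsSymmetric.inner_map_one_sub_map_eq_zero {P : E →ₗ[𝕜] E}
    (hPs : P.IsSymmetric) (hP : IsIdempotentElem P) (x : E) :
    inner 𝕜 (P x) ((1 - P) x) = 0 := by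
  rw [LinearMap.sub_apply, End.one_apply, inner_sub_right, hPs, hPs x (P x), ← End.mul_apply, hP.eq,
    sub_self]

theorem finrank_span_pair_of_inner_eq_zero {a b : E} (ha : a ≠ 0) (hb : b ≠ 0)
    (hab : inner 𝕜 a b = 0) : finrank 𝕜 (span 𝕜 {a, b}) = 2 := by
  have hind : LinearIndependent 𝕜 ![a, b] := by
    refine linearIndependent_of_ne_zero_of_inner_eq_zero (by simp [Fin.forall_fin_two, ha, hb]) ?_
    intro i j hij
    fin_cases i <;> fin_cases j <;> simp_all [inner_eq_zero_symm]
  rw [← Matrix.range_cons_cons_empty a b ![]]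
  simp [finrank_span_eq_card hind]

end InnerProduct

theorem stmt_11_general {H : Type*} [NormedAddCommGroup H] [InnerProductSpace ℂ H]
    (P₀ P₁ Q₀ Q₁ : H →ₗ[ℂ] H)
    (hP₀ : P₀ * P₀ = P₀)
    (hP₀s : P₀.IsSymmetric)
    (hP : P₀ + P₁ = 1) (hQ : Q₀ + Q₁ = 1)
    (v : H) (hv : Q₀ v = v)
    (lam₁ lam₂ : ℂ)
    (heig₀ : Q₀ (P₀ (Q₀ v)) = lam₁ • v)
    (heig₁ : Q₀ (P₁ (Q₀ v)) = lam₂ • v)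
    (hP₀v : P₀ v ≠ 0) (hP₁v : P₁ v ≠ 0) :
    v ∈ Submodule.span ℂ ({P₀ v, P₁ v} : Set H) ∧
    (∀ x ∈ Submodule.span ℂ ({P₀ v, P₁ v} : Set H),
      P₀ x ∈ Submodule.span ℂ ({P₀ v, P₁ v} : Set H) ∧
      P₁ x ∈ Submodule.span ℂ ({P₀ v, P₁ v} : Set H) ∧
      Q₀ x ∈ Submodule.span ℂ ({P₀ v, P₁ v} : Set H) ∧
      Q₁ x ∈ Submodule.span ℂ ({P₀ v, P₁ v} : Set H)) ∧
    (inner ℂ (P₀ v) (P₁ v) : ℂ) = 0 ∧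
    Module.finrank ℂ (Submodule.span ℂ ({P₀ v, P₁ v} : Set H)) = 2 := by
  obtain rfl : P₁ = 1 - P₀ := eq_sub_of_add_eq' hP
  obtain rfl : Q₁ = 1 - Q₀ := eq_sub_of_add_eq' hQ
  rw [hv] at heig₀ heig₁
  set S := span ℂ ({P₀ v, (1 - P₀) v} : Set H)
  have hvS : v ∈ S := by
    convert add_mem (subset_span (by simp) : P₀ v ∈ S) (subset_span (by simp) : (1 - P₀) v ∈ S)
    simp
  have hP₀S : S ∈ End.invtSubmodule P₀ := IsIdempotentElem.span_pair_one_sub_mem_invtSubmodule hP₀ v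
  have hQ₀S : S ∈ End.invtSubmodule Q₀ := span_pair_mem_invtSubmodule
    (heig₀ ▸ S.smul_mem lam₁ hvS) (heig₁ ▸ S.smul_mem lam₂ hvS)
  have hperp := hP₀s.inner_map_one_sub_map_eq_zero hP₀ v
  exact ⟨hvS, fun x hx ↦ ⟨hP₀S hx, End.mem_invtSubmodule_one_sub hP₀S hx, hQ₀S hx,
    End.mem_invtSubmodule_one_sub hQ₀S hx⟩, hperp,
    finrank_span_pair_of_inner_eq_zero hP₀v hP₁v hperp⟩

theorem stmt_11 {H : Type*} [NormedAddCommGroup H] [InnerProductSpace ℂ H]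
    [FiniteDimensional ℂ H]
    (P₀ P₁ Q₀ Q₁ : H →ₗ[ℂ] H)
    (hP₀ : P₀ * P₀ = P₀) (hP₁ : P₁ * P₁ = P₁)
    (hQ₀ : Q₀ * Q₀ = Q₀) (hQ₁ : Q₁ * Q₁ = Q₁)
    (hP₀s : P₀.IsSymmetric) (hP₁s : P₁.IsSymmetric)
    (hQ₀s : Q₀.IsSymmetric) (hQ₁s : Q₁.IsSymmetric)
    (hP : P₀ + P₁ = 1) (hQ : Q₀ + Q₁ = 1)
    (v : H) (hv : Q₀ v = v)
    (lam₁ lam₂ : ℂ)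
    (heig₀ : Q₀ (P₀ (Q₀ v)) = lam₁ • v)
    (heig₁ : Q₀ (P₁ (Q₀ v)) = lam₂ • v)
    (hP₀v : P₀ v ≠ 0) (hP₁v : P₁ v ≠ 0) :
    v ∈ Submodule.span ℂ ({P₀ v, P₁ v} : Set H) ∧
    (∀ x ∈ Submodule.span ℂ ({P₀ v, P₁ v} : Set H),
      P₀ x ∈ Submodule.span ℂ ({P₀ v, P₁ v} : Set H) ∧
      P₁ x ∈ Submodule.span ℂ ({P₀ v, P₁ v} : Set H) ∧
      Q₀ x ∈ Submodule.span ℂ ({P₀ v, P₁ v} : Set H) ∧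
      Q₁ x ∈ Submodule.span ℂ ({P₀ v, P₁ v} : Set H)) ∧
    (inner ℂ (P₀ v) (P₁ v) : ℂ) = 0 ∧
    Module.finrank ℂ (Submodule.span ℂ ({P₀ v, P₁ v} : Set H)) = 2 :=
  stmt_11_general P₀ P₁ Q₀ Q₁ hP₀ hP₀s hP hQ v hv lam₁ lam₂ heig₀ heig₁ hP₀v hP₁v
end
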